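/- Let M be a proper metric space and let x ≠ y be points of M. Then x and y are discretely connectable if and only if they are connected by a geodesic, i.e., there exists an isometric map γ : [0, d(x,y)] → M with γ(0) = x and γ(d(x,y)) = y. -/

import Mathlib

open Metric

/-- `x` and `y` are ε-discretely connectable in `M`: there is a finite chain
`p 0 = x, p 1, …, p n, p (n+1) = y` with all steps of length `< ε` and total length
`< d(x,y) + ε`. -/
def EpsDiscretelyConnectable (M : Type*) [MetricSpace M] (ε : ℝ) (x y : M) : Prop :=
  ∃ (n : ℕ) (p : ℕ → M), p 0 = x ∧ p (n + 1) = y ∧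
    (∀ i ≤ n, dist (p i) (p (i + 1)) < ε) ∧
    (∑ i ∈ Finset.range (n + 1), dist (p i) (p (i + 1))) < dist x y + ε

/-- `x` and `y` are discretely connectable if they are ε-discretely connectable for
every `ε > 0`. -/
def DiscretelyConnectable (M : Type*) [MetricSpace M] (x y : M) : Prop :=
  ∀ ε : ℝ, 0 < ε → EpsDiscretelyConnectable M ε x y

lemma chain_dist_le {M : Type*} [MetricSpace M] (p : ℕ → M) (a b : ℕ) (hab : a ≤ b) :
    dist (p a) (p b) ≤ ∑ j ∈ Finset.Ico a b, dist (p j) (p (j + 1)) := by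
  have h := dist_le_range_sum_dist (fun i => p (a + i)) (b - a)
  have hb : a + (b - a) = b := Nat.add_sub_cancel' hab
  rw [Finset.sum_Ico_eq_sum_range]
  calc dist (p a) (p b) = dist (p (a + 0)) (p (a + (b - a))) := by rw [hb, Nat.add_zero]
    _ ≤ ∑ i ∈ Finset.range (b - a), dist (p (a + i)) (p (a + (i+1))) := h
    _ = ∑ i ∈ Finset.range (b - a), dist (p (a + i)) (p (a + i + 1)) := by
        refine Finset.sum_congr rfl fun i _ => by rw [Nat.add_assoc]

lemma exists_approx {M : Type*} [MetricSpace M] {x y : M} (hD : 0 < dist x y) {ε : ℝ}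
    (hε : 0 < ε) (h : EpsDiscretelyConnectable M ε x y) :
    ∃ f : Set.Icc (0 : ℝ) (dist x y) → M,
      f ⟨0, Set.left_mem_Icc.2 hD.le⟩ = x ∧
      f ⟨dist x y, Set.right_mem_Icc.2 hD.le⟩ = y ∧
      (∀ t, f t ∈ closedBall x (dist x y + ε)) ∧
      ∀ s t : Set.Icc (0 : ℝ) (dist x y), dist (f s) (f t) ≤ |s.1 - t.1| + 2 * ε := by
  obtain ⟨k, p, hp0, hpk, hstep, hsum⟩ := h
  set D := dist x y with hDdef
  set t : ℕ → ℝ := fun i => ∑ j ∈ Finset.range i, dist (p j) (p (j + 1)) with ht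
  have htmono : Monotone t := by
    intro a b hab
    exact Finset.sum_le_sum_of_subset_of_nonneg (Finset.range_subset_range.2 hab)
      (fun i _ _ => dist_nonneg)
  have ht0 : t 0 = 0 := by simp [ht]
  have htnn : ∀ i, 0 ≤ t i := fun i => ht0 ▸ htmono (Nat.zero_le i)
  have hdist_t : ∀ a b, a ≤ b → dist (p a) (p b) ≤ t b - t a := by
    intro a b hab
    have := chain_dist_le p a b hab
    rwa [Finset.sum_Ico_eq_sub _ hab] at this
  set L : ℝ := t (k + 1) with hL
  have hDL : D ≤ L := by
    calc D = dist (p 0) (p (k + 1)) := by rw [hp0, hpk]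
      _ ≤ t (k + 1) - t 0 := hdist_t 0 (k + 1) (Nat.zero_le _)
      _ = L := by rw [ht0]; ring
  have hLD : L < D + ε := hsum
  -- index function
  have hfilt : ∀ r : ℝ, 0 ≤ r →
      ((Finset.range (k + 2)).filter (fun i => t i ≤ r)).Nonempty := by
    intro r hr
    exact ⟨0, Finset.mem_filter.2 ⟨Finset.mem_range.2 (Nat.succ_pos _), ht0 ▸ hr⟩⟩
  classical
  have hrnn : ∀ s : Set.Icc (0 : ℝ) D, 0 ≤ s.1 * L / D :=
    fun s => div_nonneg (mul_nonneg s.2.1 ((hD.le).trans hDL)) hD.le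
  set idx : Set.Icc (0 : ℝ) D → ℕ := fun s =>
    ((Finset.range (k + 2)).filter (fun i => t i ≤ s.1 * L / D)).max'
      (hfilt _ (hrnn s)) with hidx
  have hidx_mem : ∀ s, idx s ∈ (Finset.range (k + 2)).filter (fun i => t i ≤ s.1 * L / D) :=
    fun s => Finset.max'_mem _ _
  have hidx_le : ∀ s, idx s ≤ k + 1 := fun s =>
    Nat.lt_succ_iff.1 (Finset.mem_range.1 (Finset.mem_filter.1 (hidx_mem s)).1)
  have hidx_t : ∀ s, t (idx s) ≤ s.1 * L / D := fun s => (Finset.mem_filter.1 (hidx_mem s)).2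
  have hidx_ge : ∀ s : Set.Icc (0:ℝ) D, ∀ i ≤ k + 1, t i ≤ s.1 * L / D → i ≤ idx s := by
    intro s i hi hti
    exact Finset.le_max' _ i (Finset.mem_filter.2 ⟨Finset.mem_range.2 (Nat.lt_succ_of_le hi), hti⟩)
  -- lower bound on t (idx s)
  have hidx_lb : ∀ s : Set.Icc (0:ℝ) D, s.1 * L / D - ε < t (idx s) := by
    intro s
    rcases eq_or_lt_of_le (hidx_le s) with heq | hlt
    · have : s.1 * L / D ≤ L := by
        rw [div_le_iff₀ hD]
        calc s.1 * L ≤ D * L := by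
              apply mul_le_mul_of_nonneg_right s.2.2 (hD.le.trans hDL)
          _ = L * D := mul_comm _ _
      rw [heq]
      linarith
    · have hnot : ¬ t (idx s + 1) ≤ s.1 * L / D := by
        intro hcon
        have := hidx_ge s (idx s + 1) hlt hcon
        omega
      push_neg at hnot
      have hstep' : t (idx s + 1) - t (idx s) < ε := by
        have : t (idx s + 1) - t (idx s) = dist (p (idx s)) (p (idx s + 1)) := by
          simp [ht, Finset.sum_range_succ]
        rw [this]
        exact hstep _ (Nat.lt_succ_iff.1 hlt)
      linarith
  -- monotonicity of idx
  have hidx_mono : ∀ s u : Set.Icc (0:ℝ) D, s.1 ≤ u.1 → idx s ≤ idx u := by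
    intro s u hsu
    refine hidx_ge u (idx s) (hidx_le s) ((hidx_t s).trans ?_)
    have hL0 : 0 ≤ L := hD.le.trans hDL
    gcongr
  -- the function
  set f : Set.Icc (0 : ℝ) D → M := fun s => p (idx s) with hf
  refine ⟨f, ?_, ?_, ?_, ?_⟩
  · -- f 0 = x
    have h0 : t (idx ⟨0, Set.left_mem_Icc.2 hD.le⟩) = 0 := by
      have := hidx_t ⟨0, Set.left_mem_Icc.2 hD.le⟩
      simp only [zero_mul, zero_div] at this
      exact le_antisymm this (htnn _)
    have : dist (p 0) (p (idx ⟨0, Set.left_mem_Icc.2 hD.le⟩)) ≤ 0 := by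
      have := hdist_t 0 _ (Nat.zero_le (idx ⟨0, Set.left_mem_Icc.2 hD.le⟩))
      rw [h0, ht0] at this; linarith
    have heq0 := le_antisymm this dist_nonneg
    show p (idx ⟨0, Set.left_mem_Icc.2 hD.le⟩) = x
    rw [← (dist_eq_zero.1 heq0), hp0]
  · -- f D = y
    have hDL' : t (k+1) ≤ (⟨D, Set.right_mem_Icc.2 hD.le⟩ : Set.Icc (0:ℝ) D).1 * L / D := by
      show t (k + 1) ≤ D * L / D
      have hE : D * L / D = L := by field_simp
      rw [hE]
    have := hidx_ge ⟨D, Set.right_mem_Icc.2 hD.le⟩ (k+1) le_rfl hDL'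
    have heq : idx ⟨D, Set.right_mem_Icc.2 hD.le⟩ = k + 1 := le_antisymm (hidx_le _) this
    rw [hf]
    simp only [heq]
    exact (congrArg p heq).trans hpk
  · -- in ball
    intro s
    rw [mem_closedBall, dist_comm]
    calc dist x (f s) = dist (p 0) (p (idx s)) := by rw [hp0]
      _ ≤ t (idx s) - t 0 := hdist_t 0 _ (Nat.zero_le _)
      _ = t (idx s) := by rw [ht0]; ring
      _ ≤ s.1 * L / D := hidx_t s
      _ ≤ L := by
          rw [div_le_iff₀ hD]
          calc s.1 * L ≤ D * L := mul_le_mul_of_nonneg_right s.2.2 (hD.le.trans hDL)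
            _ = L * D := mul_comm _ _
      _ ≤ D + ε := hLD.le
  · -- almost Lipschitz
    have key : ∀ s u : Set.Icc (0:ℝ) D, s.1 ≤ u.1 → dist (f s) (f u) ≤ |s.1 - u.1| + 2 * ε := by
      intro s u hsu
      have h1 : dist (f s) (f u) ≤ t (idx u) - t (idx s) := hdist_t _ _ (hidx_mono s u hsu)
      have h2 : t (idx u) ≤ u.1 * L / D := hidx_t u
      have h3 : s.1 * L / D - ε < t (idx s) := hidx_lb s
      have h4 : u.1 * L / D - s.1 * L / D ≤ (u.1 - s.1) + ε := by
        have heq : u.1 * L / D - s.1 * L / D = (u.1 - s.1) * L / D := by ring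
        rw [heq]
        have hud : u.1 - s.1 ≤ D := by
          have := u.2.2; have := s.2.1; linarith
        have hLDe : 0 ≤ L - D := by linarith
        have hmul : (u.1 - s.1) * L ≤ ((u.1 - s.1) + (L - D)) * D := by nlinarith
        have h5 : (u.1 - s.1) * L / D ≤ (u.1 - s.1) + (L - D) := by
          rw [div_le_iff₀ hD]; linarith
        linarith
      have habs : |s.1 - u.1| = u.1 - s.1 := by rw [abs_sub_comm]; exact abs_of_nonneg (by linarith)
      rw [habs]; linarith
    intro s u
    rcases le_total s.1 u.1 with hsu | hus
    · exact key s u hsu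
    · rw [dist_comm, abs_sub_comm]; exact key u s hus


lemma geodesic_imp {M : Type*} [MetricSpace M] {x y : M} (hD : 0 < dist x y)
    (hg : ∃ γ : ℝ → M, γ 0 = x ∧ γ (dist x y) = y ∧
      ∀ s ∈ Set.Icc (0 : ℝ) (dist x y), ∀ t ∈ Set.Icc (0 : ℝ) (dist x y),
        dist (γ s) (γ t) = |s - t|) : DiscretelyConnectable M x y := by
  obtain ⟨γ, hγ0, hγD, hγ⟩ := hg
  intro ε hε
  obtain ⟨n, hn⟩ := exists_nat_gt (dist x y / ε)
  set D := dist x y with hDdef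
  have hmem : ∀ i : ℕ, i ≤ n + 1 → (i : ℝ) * D / (n + 1) ∈ Set.Icc (0 : ℝ) D := by
    intro i hi
    have hi' : (i : ℝ) ≤ (n : ℝ) + 1 := by exact_mod_cast hi
    constructor
    · positivity
    · rw [div_le_iff₀ (by positivity)]
      nlinarith
  have hstepval : ∀ i : ℕ, i ≤ n →
      dist (γ ((i : ℝ) * D / (n+1))) (γ (((i+1 : ℕ) : ℝ) * D / (n+1))) = D / (n+1) := by
    intro i hi
    rw [hγ _ (hmem i (by omega)) _ (hmem (i+1) (by omega))]
    push_cast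
    have heq : (i : ℝ) * D / (↑n + 1) - ((i : ℝ) + 1) * D / (↑n + 1) = -(D / (↑n + 1)) := by
      ring
    rw [heq, abs_neg, abs_of_nonneg (by positivity)]
  have hsmall : D / (n + 1) < ε := by
    rw [div_lt_iff₀ (by positivity)]
    have : D < n * ε := by
      rw [div_lt_iff₀ hε] at hn; linarith
    nlinarith
  refine ⟨n, fun i : ℕ => γ ((i : ℝ) * D / (n + 1)), by simp [hγ0], ?_, ?_, ?_⟩
  · show γ (((n+1 : ℕ) : ℝ) * D / (n + 1)) = y
    push_cast
    rw [mul_div_cancel_left₀ _ (by positivity : ((n:ℝ)+1) ≠ 0), hγD]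
  · intro i hi
    rw [hstepval i hi]
    exact hsmall
  · have : ∀ i ∈ Finset.range (n + 1),
        dist (γ ((i : ℝ) * D / (n+1))) (γ (((i+1 : ℕ) : ℝ) * D / (n+1))) = D / (n+1) := by
      intro i hi
      exact hstepval i (Nat.lt_succ_iff.1 (Finset.mem_range.1 hi))
    rw [Finset.sum_congr rfl this, Finset.sum_const, Finset.card_range, nsmul_eq_mul]
    push_cast
    rw [mul_div_cancel₀ _ (by positivity)]
    linarith

lemma disc_imp {M : Type*} [MetricSpace M] [ProperSpace M] {x y : M} (hD : 0 < dist x y)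
    (h : DiscretelyConnectable M x y) :
    ∃ γ : ℝ → M, γ 0 = x ∧ γ (dist x y) = y ∧
      ∀ s ∈ Set.Icc (0 : ℝ) (dist x y), ∀ t ∈ Set.Icc (0 : ℝ) (dist x y),
        dist (γ s) (γ t) = |s - t| := by
  classical
  set D := dist x y with hDdef
  have h0mem : (0:ℝ) ∈ Set.Icc (0:ℝ) D := Set.left_mem_Icc.2 hD.le
  have hDmem : D ∈ Set.Icc (0:ℝ) D := Set.right_mem_Icc.2 hD.le
  have H : ∀ n : ℕ, ∃ f : Set.Icc (0 : ℝ) D → M,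
      f ⟨0, h0mem⟩ = x ∧ f ⟨D, hDmem⟩ = y ∧
      (∀ t, f t ∈ closedBall x (D + 1)) ∧
      ∀ s t : Set.Icc (0:ℝ) D, dist (f s) (f t) ≤ |s.1 - t.1| + 2 * (1 / (n + 1)) := by
    intro n
    have hε : (0:ℝ) < 1 / (n + 1) := by positivity
    obtain ⟨f, h1, h2, h3, h4⟩ := exists_approx hD hε (h _ hε)
    refine ⟨f, h1, h2, fun t => ?_, h4⟩
    have hb := h3 t
    rw [mem_closedBall] at hb ⊢
    have hle1 : (1:ℝ) / (n + 1) ≤ 1 := by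
      rw [div_le_one (by positivity)]; push_cast; linarith [Nat.cast_nonneg (α := ℝ) n]
    linarith
  choose F hF0 hFD hFball hFlip using H
  set S : Set (Set.Icc (0:ℝ) D → M) := {f | ∀ t, f t ∈ closedBall x (D + 1)} with hS
  have hScomp : IsCompact S := isCompact_pi_infinite (fun t => isCompact_closedBall x _)
  have hmap : Filter.map F Filter.atTop ≤ Filter.principal S :=
    Filter.le_principal_iff.2 (Filter.mem_map.2 (Filter.Eventually.of_forall fun n => show F n ∈ S from fun t => hFball n t))
  obtain ⟨f₀, hf₀S, hf₀⟩ := hScomp.exists_clusterPt hmap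
  have hfreq : ∀ U : Set (Set.Icc (0:ℝ) D → M), IsOpen U → f₀ ∈ U →
      ∃ᶠ n in Filter.atTop, F n ∈ U := by
    intro U hU hfU
    exact (mapClusterPt_iff_frequently.1 hf₀) U (hU.mem_nhds hfU)
  -- f₀ is 1-Lipschitz
  have hlip : ∀ s t : Set.Icc (0:ℝ) D, dist (f₀ s) (f₀ t) ≤ |s.1 - t.1| := by
    intro s t
    by_contra hcon
    push_neg at hcon
    set δ := dist (f₀ s) (f₀ t) - |s.1 - t.1| with hδ
    have hδpos : 0 < δ := by simp only [hδ]; linarith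
    set U : Set (Set.Icc (0:ℝ) D → M) := {f | |s.1 - t.1| + δ / 2 < dist (f s) (f t)} with hU
    have hUopen : IsOpen U := by
      have hc : Continuous fun f : Set.Icc (0:ℝ) D → M => dist (f s) (f t) :=
        (continuous_apply s).dist (continuous_apply t)
      exact isOpen_lt continuous_const hc
    have hfU : f₀ ∈ U := by
      simp only [hU, Set.mem_setOf_eq]; linarith
    have hev : ∀ᶠ n : ℕ in Filter.atTop, 2 * ((1:ℝ) / (n + 1)) < δ / 2 := by
      have hT : Filter.Tendsto (fun n : ℕ => 2 * ((1:ℝ) / (n + 1))) Filter.atTop (nhds 0) := by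
        have := tendsto_one_div_add_atTop_nhds_zero_nat (𝕜 := ℝ)
        simpa using this.const_mul 2
      exact hT.eventually (gt_mem_nhds (by linarith))
    obtain ⟨n, hn1, hn2⟩ := ((hfreq U hUopen hfU).and_eventually hev).exists
    have hb := hFlip n s t
    have : |s.1 - t.1| + δ / 2 < dist (F n s) (F n t) := hn1
    linarith
  -- endpoints
  have hend : ∀ (z : M) (t0 : Set.Icc (0:ℝ) D), (∀ n, F n t0 = z) → f₀ t0 = z := by
    intro z t0 hFz
    by_contra hne
    have hδ : 0 < dist (f₀ t0) z := dist_pos.2 hne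
    set U : Set (Set.Icc (0:ℝ) D → M) := {f | dist (f₀ t0) z / 2 < dist (f t0) z} with hU
    have hUopen : IsOpen U := by
      have hc : Continuous fun f : Set.Icc (0:ℝ) D → M => dist (f t0) z :=
        (continuous_apply t0).dist continuous_const
      exact isOpen_lt continuous_const hc
    have hfU : f₀ ∈ U := by simp only [hU, Set.mem_setOf_eq]; linarith
    obtain ⟨n, hn⟩ := (hfreq U hUopen hfU).exists
    have : dist (f₀ t0) z / 2 < dist (F n t0) z := hn
    rw [hFz n, dist_self] at this
    linarith
  have hf₀0 : f₀ ⟨0, h0mem⟩ = x := hend x _ hF0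
  have hf₀D : f₀ ⟨D, hDmem⟩ = y := hend y _ hFD
  -- assemble γ
  refine ⟨fun r => if hr : r ∈ Set.Icc (0:ℝ) D then f₀ ⟨r, hr⟩ else x, ?_, ?_, ?_⟩
  · show (if hr : (0:ℝ) ∈ Set.Icc 0 D then f₀ ⟨0, hr⟩ else x) = x
    rw [dif_pos h0mem]; exact hf₀0
  · show (if hr : D ∈ Set.Icc 0 D then f₀ ⟨D, hr⟩ else x) = y
    rw [dif_pos hDmem]; exact hf₀D
  · intro s hs t ht
    show dist (if hr : s ∈ Set.Icc 0 D then f₀ ⟨s, hr⟩ else x)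
      (if hr : t ∈ Set.Icc 0 D then f₀ ⟨t, hr⟩ else x) = |s - t|
    rw [dif_pos hs, dif_pos ht]
    refine le_antisymm (hlip ⟨s, hs⟩ ⟨t, ht⟩) ?_
    have hxs : ∀ (u : ℝ) (hu : u ∈ Set.Icc (0:ℝ) D), dist x (f₀ ⟨u, hu⟩) ≤ u := by
      intro u hu
      have := hlip ⟨0, h0mem⟩ ⟨u, hu⟩
      rw [hf₀0] at this
      calc dist x (f₀ ⟨u, hu⟩) ≤ |0 - u| := this
        _ = u := by rw [zero_sub, abs_neg, abs_of_nonneg hu.1]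
    have hys : ∀ (u : ℝ) (hu : u ∈ Set.Icc (0:ℝ) D), dist (f₀ ⟨u, hu⟩) y ≤ D - u := by
      intro u hu
      have := hlip ⟨u, hu⟩ ⟨D, hDmem⟩
      rw [hf₀D] at this
      calc dist (f₀ ⟨u, hu⟩) y ≤ |u - D| := this
        _ = D - u := by rw [abs_of_nonpos (by linarith [hu.2]), neg_sub]
    have key : ∀ (u v : ℝ) (hu : u ∈ Set.Icc (0:ℝ) D) (hv : v ∈ Set.Icc (0:ℝ) D), u ≤ v →
        v - u ≤ dist (f₀ ⟨u, hu⟩) (f₀ ⟨v, hv⟩) := by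
      intro u v hu hv huv
      have htri : D ≤ dist x (f₀ ⟨u, hu⟩) + dist (f₀ ⟨u, hu⟩) (f₀ ⟨v, hv⟩) + dist (f₀ ⟨v, hv⟩) y :=
        dist_triangle4 x _ _ y
      have h1 := hxs u hu
      have h2 := hys v hv
      linarith
    rcases le_total s t with hst | hts
    · rw [abs_of_nonpos (by linarith), neg_sub]
      exact key s t hs ht hst
    · rw [abs_of_nonneg (by linarith)]
      calc s - t ≤ dist (f₀ ⟨t, ht⟩) (f₀ ⟨s, hs⟩) := key t s ht hs hts
        _ = dist (f₀ ⟨s, hs⟩) (f₀ ⟨t, ht⟩) := dist_comm _ _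

/-- In a proper metric space, two distinct points are discretely connectable if and only
if they are connected by a geodesic. -/
theorem discretelyConnectable_iff_geodesic
    (M : Type*) [MetricSpace M] [ProperSpace M] (x y : M) (hxy : x ≠ y) :
    DiscretelyConnectable M x y ↔
    ∃ γ : ℝ → M, γ 0 = x ∧ γ (dist x y) = y ∧
      ∀ s ∈ Set.Icc (0 : ℝ) (dist x y), ∀ t ∈ Set.Icc (0 : ℝ) (dist x y),
        dist (γ s) (γ t) = |s - t| := by
  have hD : 0 < dist x y := dist_pos.2 hxy
  exact ⟨fun h => disc_imp hD h, fun hg => geodesic_imp hD hg⟩
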